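/- (Retracts of right-angled Coxeter groups, Section 10.4.) Let M be a Coxeter matrix on a type B that is right-angled, meaning for all i ≠ j either M i j = 2 or M i j = 0 (the value 0 encoding that the product of the two generators has infinite order), and let cs : CoxeterSystem M W be a Coxeter system with simple reflections s_i := cs.simple i. Then for every subset S ⊆ B there exists a group homomorphism f : W → W such that f(s_i) = s_i for all i ∈ S and f(s_i) = 1 for all i ∉ S. In particular, f restricts to the identity map on the subgroup generated by {s_i : i ∈ S}, so this subgroup is a retract (and hence a quotient) of W. -/
import Mathlib

/-- Retracts of right-angled Coxeter groups (Section 10.4): if `M` is a right-angled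
Coxeter matrix (all off-diagonal entries `2` or `0`) and `cs` is a Coxeter system for `M`
on `W`, then for any subset `S` of the generators there is a group homomorphism `W → W`
fixing the simple reflections indexed by `S`, killing the others, and restricting to the
identity on the subgroup generated by `{s_i : i ∈ S}`; so that subgroup is a retract of
`W`. -/
theorem right_angled_coxeter_retract {B : Type*} (M : CoxeterMatrix B)
    (hM : ∀ i j : B, i ≠ j → M i j = 2 ∨ M i j = 0)
    {W : Type*} [Group W] (cs : CoxeterSystem M W) (S : Set B) :
    ∃ f : W →* W,
      (∀ i ∈ S, f (cs.simple i) = cs.simple i) ∧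
      (∀ i ∉ S, f (cs.simple i) = 1) ∧
      ∀ w ∈ Subgroup.closure (cs.simple '' S), f w = w := by
  classical
  set g : B → W := fun i => if i ∈ S then cs.simple i else 1 with hg
  have hlift : M.IsLiftable g := by
    intro i j
    by_cases hij : i = j
    · subst hij
      simp only [hg, M.diagonal i, pow_one]
      by_cases h : i ∈ S <;> simp [h, cs.simple_mul_simple_self]
    · rcases hM i j hij with h2 | h0
      · rw [h2]
        by_cases hi : i ∈ S <;> by_cases hj : j ∈ S <;>
          simp only [hg, hi, hj, if_pos, if_neg, if_true, if_false, mul_one, one_mul]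
        · have := cs.simple_mul_simple_pow i j
          rwa [h2] at this
        · simp [sq, cs.simple_mul_simple_self]
        · simp [sq, cs.simple_mul_simple_self]
        · simp
      · rw [h0]; simp
  refine ⟨cs.lift ⟨g, hlift⟩, ?_, ?_, ?_⟩
  · intro i hi
    rw [cs.lift_apply_simple]
    simp [hg, hi]
  · intro i hi
    rw [cs.lift_apply_simple]
    simp [hg, hi]
  · intro w hw
    induction hw using Subgroup.closure_induction with
    | mem x hx =>
        obtain ⟨i, hi, rfl⟩ := hx
        rw [cs.lift_apply_simple]; simp [hg, hi]
    | one => simp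
    | mul x y _ _ hx hy => simp [map_mul, hx, hy]
    | inv x _ hx => simp [map_inv, hx]
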